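/- arXiv:math/0702064 — 6 statements merged into one kernel-verified Lean document; each statement's English description precedes it below -/
import Mathlib

section
/- Let f be a positive differentiable function on [0,1) and a, b real numbers such that for all r ∈ [0,1), -((a+br)/(1-r²))·f(r) ≤ f'(r) ≤ ((a-br)/(1-r²))·f(r). Then for all 0 ≤ r' ≤ r < 1, f(r) ≤ ((1+r)/(1+r'))^a · ((1-r²)/(1-r'²))^((b-a)/2) · f(r'). -/
theorem stmt2 (f f' : ℝ → ℝ) (a b : ℝ)
    (hpos : ∀ r ∈ Set.Ico (0:ℝ) 1, 0 < f r)
    (hderiv : ∀ r ∈ Set.Ico (0:ℝ) 1, HasDerivAt f (f' r) r)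
    (hlb : ∀ r ∈ Set.Ico (0:ℝ) 1, -((a + b * r) / (1 - r ^ 2)) * f r ≤ f' r)
    (hub : ∀ r ∈ Set.Ico (0:ℝ) 1, f' r ≤ ((a - b * r) / (1 - r ^ 2)) * f r)
    (r' r : ℝ) (h0 : 0 ≤ r') (h1 : r' ≤ r) (h2 : r < 1) :
    f r ≤ ((1 + r) / (1 + r')) ^ a * ((1 - r ^ 2) / (1 - r' ^ 2)) ^ ((b - a) / 2) * f r' := by
  have hr : r ∈ Set.Ico (0:ℝ) 1 := ⟨le_trans h0 h1, h2⟩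
  have hr' : r' ∈ Set.Ico (0:ℝ) 1 := ⟨h0, lt_of_le_of_lt h1 h2⟩
  have key : ∀ x ∈ Set.Ico (0:ℝ) 1, 0 < 1 + x ∧ 0 < 1 - x ^ 2 := by
    intro x hx
    constructor
    · linarith [hx.1]
    · nlinarith [hx.1, hx.2]
  set ψ : ℝ → ℝ := fun x => a * Real.log (1 + x) + (b - a) / 2 * Real.log (1 - x ^ 2)
      - Real.log (f x) with hψ
  have hψderiv : ∀ x ∈ Set.Ico (0:ℝ) 1,
      HasDerivAt ψ (a * (1 / (1 + x)) + (b - a) / 2 * (-(2 * x) / (1 - x ^ 2)) - f' x / f x) x := by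
    intro x hx
    obtain ⟨hx1, hx2⟩ := key x hx
    have d1 : HasDerivAt (fun y : ℝ => Real.log (1 + y)) (1 / (1 + x)) x := by
      have : HasDerivAt (fun y : ℝ => 1 + y) 1 x := (hasDerivAt_id x).const_add 1
      simpa using this.log hx1.ne'
    have d2 : HasDerivAt (fun y : ℝ => Real.log (1 - y ^ 2)) (-(2 * x) / (1 - x ^ 2)) x := by
      have h : HasDerivAt (fun y : ℝ => 1 - y ^ 2) (-(2 * x)) x := by
        simpa using (hasDerivAt_pow 2 x).const_sub 1
      exact h.log hx2.ne'
    have d3 : HasDerivAt (fun y : ℝ => Real.log (f y)) (f' x / f x) x :=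
      (hderiv x hx).log (hpos x hx).ne'
    exact ((d1.const_mul a).add (d2.const_mul ((b - a) / 2))).sub d3
  have hmono : ψ r' ≤ ψ r := by
    have hsub : Set.Icc r' r ⊆ Set.Ico (0:ℝ) 1 := fun x hx =>
      ⟨le_trans h0 hx.1, lt_of_le_of_lt hx.2 h2⟩
    have hmono' : MonotoneOn ψ (Set.Icc r' r) := by
      apply monotoneOn_of_deriv_nonneg (convex_Icc r' r)
      · exact fun x hx => ((hψderiv x (hsub hx)).continuousAt).continuousWithinAt
      · intro x hx
        rw [interior_Icc] at hx
        exact ((hψderiv x (hsub (Set.mem_Icc_of_Ioo hx))).differentiableAt).differentiableWithinAt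
      · intro x hx
        rw [interior_Icc] at hx
        have hx' := hsub (Set.mem_Icc_of_Ioo hx)
        obtain ⟨hx1, hx2⟩ := key x hx'
        rw [(hψderiv x hx').deriv]
        have hfx := hpos x hx'
        have hub' := hub x hx'
        have hdivle : f' x / f x ≤ (a - b * x) / (1 - x ^ 2) := by
          rw [div_le_iff₀ hfx]
          exact hub'
        have heq : a * (1 / (1 + x)) + (b - a) / 2 * (-(2 * x) / (1 - x ^ 2))
            = (a - b * x) / (1 - x ^ 2) := by
          field_simp
          ring
        rw [heq]
        linarith
    exact hmono' (Set.left_mem_Icc.2 h1) (Set.right_mem_Icc.2 h1) h1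
  obtain ⟨hp1, hp2⟩ := key r hr
  obtain ⟨hq1, hq2⟩ := key r' hr'
  have hX : (0:ℝ) < ((1 + r) / (1 + r')) ^ a * ((1 - r ^ 2) / (1 - r' ^ 2)) ^ ((b - a) / 2) :=
    mul_pos (Real.rpow_pos_of_pos (div_pos hp1 hq1) a)
      (Real.rpow_pos_of_pos (div_pos hp2 hq2) _)
  rw [← Real.log_le_log_iff (hpos r hr) (mul_pos hX (hpos r' hr'))]
  rw [Real.log_mul hX.ne' (hpos r' hr').ne',
    Real.log_mul (Real.rpow_pos_of_pos (div_pos hp1 hq1) a).ne'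
      (Real.rpow_pos_of_pos (div_pos hp2 hq2) _).ne',
    Real.log_rpow (div_pos hp1 hq1), Real.log_rpow (div_pos hp2 hq2),
    Real.log_div hp1.ne' hq1.ne', Real.log_div hp2.ne' hq2.ne']
  have := hmono
  simp only [hψ] at this
  linarith
end

section
/- Let f be a positive differentiable function on [0,1) and a, b real numbers such that for all r ∈ [0,1), -((a+br)/(1-r²))·f(r) ≤ f'(r) ≤ ((a-br)/(1-r²))·f(r). Then for all 0 ≤ r' ≤ r < 1, f(r) ≥ ((1+r)/(1+r'))^(-a) · ((1-r²)/(1-r'²))^((b+a)/2) · f(r'). -/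
/-!
Writing the lower bound as `f' ≥ G' f` with `G t = ((b - a)/2) log (1 + t) + ((b + a)/2) log (1 - t)`,
the function `f · exp (-G)` has nonnegative derivative, hence is nondecreasing; this gives
`f r ≥ exp (G r - G r') f r'`, and `exp (G r - G r')` is exactly the stated product of powers.
-/

open Real Set

theorem exp_sub_mul_le_of_le_mul_deriv {f f' G G' : ℝ → ℝ} {s : Set ℝ} (hs : Convex ℝ s)
    (hf : ∀ t ∈ s, HasDerivAt f (f' t) t) (hG : ∀ t ∈ s, HasDerivAt G (G' t) t)
    (hle : ∀ t ∈ s, G' t * f t ≤ f' t) {x y : ℝ} (hx : x ∈ s) (hy : y ∈ s) (hxy : x ≤ y) :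
    exp (G y - G x) * f x ≤ f y := by
  have hderiv : ∀ t ∈ s,
      HasDerivAt (fun t => f t * exp (-G t)) ((f' t - G' t * f t) * exp (-G t)) t := by
    intro t ht
    refine ((hf t ht).mul (hG t ht).neg.exp).congr_deriv ?_
    simp only [Pi.neg_apply]
    ring
  have hmono : MonotoneOn (fun t => f t * exp (-G t)) s := by
    refine monotoneOn_of_hasDerivWithinAt_nonneg hs
      (fun t ht => (hderiv t ht).continuousAt.continuousWithinAt)
      (fun t ht => (hderiv t (interior_subset ht)).hasDerivWithinAt) fun t ht => ?_
    have := hle t (interior_subset ht)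
    exact mul_nonneg (by linarith) (exp_nonneg _)
  have key := mul_le_mul_of_nonneg_right (hmono hx hy hxy) (exp_nonneg (G y))
  calc exp (G y - G x) * f x = f x * exp (-G x) * exp (G y) := by
        rw [exp_sub, exp_neg]; field_simp
    _ ≤ f y * exp (-G y) * exp (G y) := key
    _ = f y := by rw [exp_neg]; field_simp

noncomputable def logIntegratingFactor (a b t : ℝ) : ℝ :=
  (b - a) / 2 * log (1 + t) + (b + a) / 2 * log (1 - t)

theorem hasDerivAt_logIntegratingFactor (a b : ℝ) {t : ℝ} (ht : t ∈ Ioo (-1) 1) :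
    HasDerivAt (logIntegratingFactor a b) (-((a + b * t) / (1 - t ^ 2))) t := by
  have hp : 1 + t ≠ 0 := by linarith [ht.1]
  have hm : 1 - t ≠ 0 := by linarith [ht.2]
  have hlogp := ((hasDerivAt_id t).const_add 1).log hp
  have hlogm := ((hasDerivAt_id t).const_sub 1).log hm
  refine ((hlogp.const_mul ((b - a) / 2)).add (hlogm.const_mul ((b + a) / 2))).congr_deriv ?_
  simp only [id]
  rw [show 1 - t ^ 2 = (1 - t) * (1 + t) by ring]
  field_simp
  ring

theorem exp_logIntegratingFactor_sub (a b : ℝ) {r r' : ℝ} (hr : r ∈ Ioo (-1) 1) (hr' : r' ∈ Ioo (-1) 1) :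
    exp (logIntegratingFactor a b r - logIntegratingFactor a b r') =
      ((1 + r) / (1 + r')) ^ (-a) * ((1 - r ^ 2) / (1 - r' ^ 2)) ^ ((b + a) / 2) := by
  have hp : 0 < 1 + r := by linarith [hr.1]
  have hm : 0 < 1 - r := by linarith [hr.2]
  have hp' : 0 < 1 + r' := by linarith [hr'.1]
  have hm' : 0 < 1 - r' := by linarith [hr'.2]
  rw [show 1 - r ^ 2 = (1 - r) * (1 + r) by ring, show 1 - r' ^ 2 = (1 - r') * (1 + r') by ring,
    rpow_def_of_pos (by positivity), rpow_def_of_pos (by positivity), ← exp_add,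
    log_div hp.ne' hp'.ne', log_div (by positivity) (by positivity),
    log_mul hm.ne' hp.ne', log_mul hm'.ne' hp'.ne', logIntegratingFactor, logIntegratingFactor]
  ring_nf

theorem stmt3_general (f f' : ℝ → ℝ) (a b : ℝ)
    (hderiv : ∀ r ∈ Set.Ico (0:ℝ) 1, HasDerivAt f (f' r) r)
    (hlb : ∀ r ∈ Set.Ico (0:ℝ) 1, -((a + b * r) / (1 - r ^ 2)) * f r ≤ f' r)
    (r' r : ℝ) (h0 : 0 ≤ r') (h1 : r' ≤ r) (h2 : r < 1) :
    f r ≥ ((1 + r) / (1 + r')) ^ (-a) * ((1 - r ^ 2) / (1 - r' ^ 2)) ^ ((b + a) / 2) * f r' := by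
  have hsub : Ico (0:ℝ) 1 ⊆ Ioo (-1) 1 := fun t ht => ⟨by linarith [ht.1], ht.2⟩
  have hr' : r' ∈ Ico (0:ℝ) 1 := ⟨h0, h1.trans_lt h2⟩
  have hr : r ∈ Ico (0:ℝ) 1 := ⟨h0.trans h1, h2⟩
  rw [ge_iff_le, ← exp_logIntegratingFactor_sub a b (hsub hr) (hsub hr')]
  exact exp_sub_mul_le_of_le_mul_deriv (convex_Ico 0 1) hderiv
    (fun t ht => hasDerivAt_logIntegratingFactor a b (hsub ht)) hlb hr' hr h1

theorem stmt3 (f f' : ℝ → ℝ) (a b : ℝ)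
    (hpos : ∀ r ∈ Set.Ico (0:ℝ) 1, 0 < f r)
    (hderiv : ∀ r ∈ Set.Ico (0:ℝ) 1, HasDerivAt f (f' r) r)
    (hlb : ∀ r ∈ Set.Ico (0:ℝ) 1, -((a + b * r) / (1 - r ^ 2)) * f r ≤ f' r)
    (hub : ∀ r ∈ Set.Ico (0:ℝ) 1, f' r ≤ ((a - b * r) / (1 - r ^ 2)) * f r)
    (r' r : ℝ) (h0 : 0 ≤ r') (h1 : r' ≤ r) (h2 : r < 1) :
    f r ≥ ((1 + r) / (1 + r')) ^ (-a) * ((1 - r ^ 2) / (1 - r' ^ 2)) ^ ((b + a) / 2) * f r' :=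
  stmt3_general f f' a b hderiv hlb r' r h0 h1 h2
end

section
/- Let n ≥ 2, λ < -n/2, and fix unit vectors η, ζ ∈ ℝⁿ. For r ∈ [0,1), the derivative in r of (1-r²)^(1+2λ)/|rη - ζ|^(n+2λ) satisfies ((n+2λ+(n-2λ-2)r)(1-r²)^(2λ))/|rη-ζ|^(n+2λ) ≤ d/dr ≤ -((n+2λ-(n-2λ-2)r)(1-r²)^(2λ))/|rη-ζ|^(n+2λ). -/
/-!
With `v = r • η - ζ`, the derivative is
`(1 - r²)^(2λ) / ‖v‖^(n+2λ) * (-2(1+2λ) r - (n+2λ) Q)`, where `Q = (1 - r²) ⟪v, η⟫ / ‖v‖²`.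
For unit vectors `η, ζ` and `|r| < 1` one has `-(1 + r) ≤ Q ≤ 1 - r`; as `n + 2λ < 0`, the
bracket is increasing in `Q`, and its values at the two endpoints are the two bounds.
-/

open Real RealInnerProductSpace

section

variable {E : Type*} [NormedAddCommGroup E] [InnerProductSpace ℝ E]

lemma hasDerivAt_norm_smul_sub_rpow (η ζ : E) (b r : ℝ) (hv : r • η - ζ ≠ 0) :
    HasDerivAt (fun s : ℝ => ‖s • η - ζ‖ ^ b)
      (b * ⟪r • η - ζ, η⟫ * ‖r • η - ζ‖ ^ (b - 2)) r := by
  have hline : HasDerivAt (fun s : ℝ => s • η - ζ) η r := by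
    simpa using ((hasDerivAt_id r).smul_const η).sub_const ζ
  have hsq : (‖r • η - ζ‖ ^ 2) ≠ 0 := by positivity
  convert (hline.norm_sq.rpow_const (p := b / 2) (Or.inl hsq)) using 1
  · ext s
    rw [← Real.rpow_natCast, ← Real.rpow_mul (norm_nonneg _)]
    norm_num [mul_div_cancel₀]
  · rw [← Real.rpow_natCast, ← Real.rpow_mul (norm_nonneg _)]
    ring_nf

lemma hasDerivAt_one_sub_sq_rpow_div_norm_rpow (η ζ : E) (a b r : ℝ) (hr : 1 - r ^ 2 ≠ 0)
    (hv : r • η - ζ ≠ 0) :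
    HasDerivAt (fun s : ℝ => (1 - s ^ 2) ^ a / ‖s • η - ζ‖ ^ b)
      ((1 - r ^ 2) ^ (a - 1) / ‖r • η - ζ‖ ^ b *
        (-2 * a * r - b * ((1 - r ^ 2) * ⟪r • η - ζ, η⟫ / ‖r • η - ζ‖ ^ 2))) r := by
  have hbase : HasDerivAt (fun s : ℝ => 1 - s ^ 2) (-(2 * r)) r := by
    simpa using (hasDerivAt_pow 2 r).const_sub 1
  have hnum : HasDerivAt (fun s : ℝ => (1 - s ^ 2) ^ a) (-(2 * r) * a * (1 - r ^ 2) ^ (a - 1)) r :=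
    hbase.rpow_const (Or.inl hr)
  have hden : ‖r • η - ζ‖ ^ b ≠ 0 := by positivity
  refine (hnum.div (hasDerivAt_norm_smul_sub_rpow η ζ b r hv) hden).congr_deriv ?_
  have hN : ‖r • η - ζ‖ ≠ 0 := norm_ne_zero_iff.2 hv
  rw [Real.rpow_sub_one hr, Real.rpow_sub (by positivity), Real.rpow_two]
  field_simp

variable {η ζ : E} {r : ℝ}

lemma smul_sub_ne_zero_of_norm_eq_one (hη : ‖η‖ = 1) (hζ : ‖ζ‖ = 1) (hr : |r| < 1) :
    r • η - ζ ≠ 0 := by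
  intro h
  rw [← sub_eq_zero.1 h, norm_smul, hη, mul_one, Real.norm_eq_abs] at hζ
  exact hr.ne hζ

lemma one_sub_sq_mul_inner_div_norm_sq_mem_Icc (hη : ‖η‖ = 1) (hζ : ‖ζ‖ = 1) (hr : |r| < 1) :
    (1 - r ^ 2) * ⟪r • η - ζ, η⟫ / ‖r • η - ζ‖ ^ 2 ∈ Set.Icc (-(1 + r)) (1 - r) := by
  obtain ⟨hr₁, hr₂⟩ := abs_lt.1 hr
  obtain ⟨ht₁, ht₂⟩ := abs_le.1 (by simpa [hη, hζ] using abs_real_inner_le_norm η ζ)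
  have hinner : ⟪r • η - ζ, η⟫ = r - ⟪η, ζ⟫ := by
    rw [inner_sub_left, real_inner_smul_left, real_inner_self_eq_norm_sq, hη, real_inner_comm]
    ring
  have hnorm : ‖r • η - ζ‖ ^ 2 = r ^ 2 - 2 * r * ⟪η, ζ⟫ + 1 := by
    rw [norm_sub_sq_real, real_inner_smul_left, norm_smul, hη, hζ, Real.norm_eq_abs, mul_one,
      sq_abs]
    ring
  have hpos : 0 < ‖r • η - ζ‖ ^ 2 := by
    have := smul_sub_ne_zero_of_norm_eq_one hη hζ hr
    positivity
  rw [Set.mem_Icc, le_div_iff₀ hpos, div_le_iff₀ hpos, hinner, hnorm]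
  -- the two gaps are `(1 + r)² (1 - t)` and `(1 - r)² (1 + t)`, where `t = ⟪η, ζ⟫`
  constructor
  · linarith [mul_nonneg (sq_nonneg (1 + r)) (sub_nonneg.2 ht₂)]
  · linarith [mul_nonneg (sq_nonneg (1 - r)) (neg_le_iff_add_nonneg'.1 ht₁)]

end

theorem stmt6_general (n : ℕ) (l : ℝ) (hl : l < -(n / 2 : ℝ))
    (η ζ : EuclideanSpace ℝ (Fin n)) (hη : ‖η‖ = 1) (hζ : ‖ζ‖ = 1)
    (r : ℝ) (hr : r ∈ Set.Ico (0:ℝ) 1) (d : ℝ)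
    (hd : HasDerivAt (fun s : ℝ => (1 - s ^ 2) ^ (1 + 2 * l) / ‖s • η - ζ‖ ^ ((n : ℝ) + 2 * l)) d r) :
    ((n + 2 * l + (n - 2 * l - 2) * r) * (1 - r ^ 2) ^ (2 * l)) / ‖r • η - ζ‖ ^ ((n : ℝ) + 2 * l) ≤ d ∧
      d ≤ -((n + 2 * l - (n - 2 * l - 2) * r) * (1 - r ^ 2) ^ (2 * l)) / ‖r • η - ζ‖ ^ ((n : ℝ) + 2 * l) := by
  obtain ⟨hr₀, hr₁⟩ := hr
  have hb : (n : ℝ) + 2 * l < 0 := by linarith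
  have hr_abs : |r| < 1 := abs_lt.2 ⟨by linarith, hr₁⟩
  have hr_sq : 0 < 1 - r ^ 2 := by nlinarith
  obtain ⟨hQ₁, hQ₂⟩ := one_sub_sq_mul_inner_div_norm_sq_mem_Icc hη hζ hr_abs
  rw [hd.unique (hasDerivAt_one_sub_sq_rpow_div_norm_rpow η ζ _ _ r hr_sq.ne'
    (smul_sub_ne_zero_of_norm_eq_one hη hζ hr_abs)), add_sub_cancel_left]
  set X := (1 - r ^ 2) ^ (2 * l)
  set V := ‖r • η - ζ‖ ^ ((n : ℝ) + 2 * l)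
  have hXV : 0 ≤ X / V := div_nonneg (rpow_nonneg hr_sq.le _) (by positivity)
  constructor
  · calc _ = X / V * (n + 2 * l + (n - 2 * l - 2) * r) := by ring
      _ ≤ _ := mul_le_mul_of_nonneg_left (by linarith [mul_le_mul_of_nonpos_left hQ₁ hb.le]) hXV
  · calc _ ≤ X / V * -(n + 2 * l - (n - 2 * l - 2) * r) :=
          mul_le_mul_of_nonneg_left (by linarith [mul_le_mul_of_nonpos_left hQ₂ hb.le]) hXV
      _ = _ := by ring

theorem stmt6 (n : ℕ) (hn : 2 ≤ n) (l : ℝ) (hl : l < -(n / 2 : ℝ))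
    (η ζ : EuclideanSpace ℝ (Fin n)) (hη : ‖η‖ = 1) (hζ : ‖ζ‖ = 1)
    (r : ℝ) (hr : r ∈ Set.Ico (0:ℝ) 1) (d : ℝ)
    (hd : HasDerivAt (fun s : ℝ => (1 - s ^ 2) ^ (1 + 2 * l) / ‖s • η - ζ‖ ^ ((n : ℝ) + 2 * l)) d r) :
    ((n + 2 * l + (n - 2 * l - 2) * r) * (1 - r ^ 2) ^ (2 * l)) / ‖r • η - ζ‖ ^ ((n : ℝ) + 2 * l) ≤ d ∧
      d ≤ -((n + 2 * l - (n - 2 * l - 2) * r) * (1 - r ^ 2) ^ (2 * l)) / ‖r • η - ζ‖ ^ ((n : ℝ) + 2 * l) :=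
  stmt6_general n l hl η ζ hη hζ r hr d hd
end

section
/- Let n ≥ 2, λ > -n/2, μ a finite positive Borel measure on the unit sphere S^{n-1} ⊂ ℝⁿ, and u(x) = ∫_{S^{n-1}} (1-|x|²)^(1+2λ)/|x-ξ|^(n+2λ) dμ(ξ) for x in the open unit ball. Then for every unit vector ζ, the function r ↦ ((1-r)^(n-1)/(1+r)^(1+2λ)) · u(rζ) is monotone decreasing on [0,1). -/
/-! Writing `D = ‖rζ - ξ‖`, the weighted integrand collapses to a single power:
`(1 - r)^(n-1) / (1 + r)^(1+2λ) · (1 - r²)^(1+2λ) / D^(n+2λ) = ((1 - r) / D)^(n+2λ)`.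
For fixed `ξ` on the sphere the base `(1 - r) / D` decreases in `r`, and `n + 2λ > 0`,
so the integrand decreases pointwise and so does its integral against `μ`. -/

open MeasureTheory Real Set

lemma one_sub_rpow_div_one_add_rpow_mul {a d α β γ : ℝ} (ha : a ∈ Ioo (-1) 1) (hd : 0 < d)
    (hγ : α + β = γ) :
    (1 - a) ^ α / (1 + a) ^ β * ((1 - a ^ 2) ^ β / d ^ γ) = ((1 - a) / d) ^ γ := by
  obtain ⟨ha₁, ha₂⟩ := ha
  have h₁ : 0 < 1 - a := by linarith
  have h₂ : 0 < 1 + a := by linarith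
  have : (1 + a) ^ β ≠ 0 := (rpow_pos_of_pos h₂ _).ne'
  have : d ^ γ ≠ 0 := (rpow_pos_of_pos hd _).ne'
  rw [show 1 - a ^ 2 = (1 - a) * (1 + a) by ring, mul_rpow h₁.le h₂.le,
    div_rpow h₁.le hd.le, ← hγ, rpow_add h₁]
  field_simp

section UnitVectors

variable {E : Type*} [NormedAddCommGroup E] [NormedSpace ℝ E] {ζ ξ : E}

lemma norm_smul_of_norm_eq_one (hζ : ‖ζ‖ = 1) {r : ℝ} (hr : 0 ≤ r) : ‖r • ζ‖ = r := by
  rw [norm_smul_of_nonneg hr, hζ, mul_one]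

lemma one_sub_le_norm_smul_sub (hζ : ‖ζ‖ = 1) (hξ : ‖ξ‖ = 1) {r : ℝ} (hr : 0 ≤ r) :
    1 - r ≤ ‖r • ζ - ξ‖ := by
  simpa [hξ, norm_smul_of_norm_eq_one hζ hr, norm_sub_rev] using norm_sub_norm_le ξ (r • ζ)

lemma norm_smul_sub_pos (hζ : ‖ζ‖ = 1) (hξ : ‖ξ‖ = 1) {r : ℝ} (hr : r ∈ Ico 0 1) :
    0 < ‖r • ζ - ξ‖ :=
  (sub_pos.2 hr.2).trans_le (one_sub_le_norm_smul_sub hζ hξ hr.1)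

end UnitVectors

section UnitVectorsInner

variable {E : Type*} [NormedAddCommGroup E] [InnerProductSpace ℝ E] {ζ ξ : E}

lemma norm_smul_sub_sq (hζ : ‖ζ‖ = 1) (hξ : ‖ξ‖ = 1) {r : ℝ} (hr : 0 ≤ r) :
    ‖r • ζ - ξ‖ ^ 2 = r ^ 2 - 2 * r * inner ℝ ζ ξ + 1 := by
  rw [norm_sub_sq_real, real_inner_smul_left, norm_smul_of_norm_eq_one hζ hr, hξ]
  ring

lemma antitoneOn_one_sub_div_norm_smul_sub (hζ : ‖ζ‖ = 1) (hξ : ‖ξ‖ = 1) :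
    AntitoneOn (fun r : ℝ => (1 - r) / ‖r • ζ - ξ‖) (Ico 0 1) := by
  intro r hr s hs hrs
  have hDr := norm_smul_sub_pos hζ hξ hr
  have hDs := norm_smul_sub_pos hζ hξ hs
  have ht : inner ℝ ζ ξ ≤ 1 := by simpa [hζ, hξ] using real_inner_le_norm ζ ξ
  have hrs₁ : r * s ≤ 1 := by nlinarith [hr.1, hs.2]
  -- `((1-r)‖sζ-ξ‖)² - ((1-s)‖rζ-ξ‖)² = 2 (s - r)(1 - ⟪ζ, ξ⟫)(1 - r s)`
  have hsq : ((1 - s) * ‖r • ζ - ξ‖) ^ 2 ≤ ((1 - r) * ‖s • ζ - ξ‖) ^ 2 := by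
    rw [mul_pow, mul_pow, norm_smul_sub_sq hζ hξ hr.1, norm_smul_sub_sq hζ hξ hs.1]
    nlinarith [mul_nonneg (mul_nonneg (sub_nonneg.2 hrs) (sub_nonneg.2 ht)) (sub_nonneg.2 hrs₁)]
  rw [div_le_div_iff₀ hDs hDr]
  exact abs_le_of_sq_le_sq' hsq (mul_nonneg (by linarith [hr.2]) hDs.le) |>.2

end UnitVectorsInner

lemma integrable_one_sub_div_norm_smul_sub_rpow {E : Type*} [NormedAddCommGroup E]
    [NormedSpace ℝ E] [ProperSpace E] [MeasurableSpace (Metric.sphere (0 : E) 1)]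
    [OpensMeasurableSpace (Metric.sphere (0 : E) 1)] (μ : Measure (Metric.sphere (0 : E) 1))
    [IsFiniteMeasure μ] {ζ : E} (hζ : ‖ζ‖ = 1) {r : ℝ} (hr : r ∈ Ico 0 1) (p : ℝ) :
    Integrable (fun ξ : Metric.sphere (0 : E) 1 => ((1 - r) / ‖r • ζ - ξ‖) ^ p) μ := by
  have hξ (ξ : Metric.sphere (0 : E) 1) : ‖(ξ : E)‖ = 1 := by simp
  refine Continuous.integrable_of_hasCompactSupport ?_ (.of_compactSpace _)
  refine (continuous_const.div (continuous_const.sub continuous_subtype_val).norm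
    fun ξ => ?_).rpow_const fun ξ => Or.inl ?_
  · exact (norm_smul_sub_pos hζ (hξ ξ) hr).ne'
  · exact (div_pos (sub_pos.2 hr.2) (norm_smul_sub_pos hζ (hξ ξ) hr)).ne'

theorem stmt8_general (n : ℕ) (l : ℝ) (hl : -(n / 2 : ℝ) < l)
    (μ : MeasureTheory.Measure (Metric.sphere (0 : EuclideanSpace ℝ (Fin n)) 1))
    [MeasureTheory.IsFiniteMeasure μ]
    (u : EuclideanSpace ℝ (Fin n) → ℝ)
    (hu : ∀ x, ‖x‖ < 1 →
      u x = ∫ ξ, (1 - ‖x‖ ^ 2) ^ (1 + 2 * l) / ‖x - (ξ : EuclideanSpace ℝ (Fin n))‖ ^ ((n : ℝ) + 2 * l) ∂μ)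
    (ζ : EuclideanSpace ℝ (Fin n)) (hζ : ‖ζ‖ = 1) :
    AntitoneOn (fun r : ℝ => (1 - r) ^ ((n : ℝ) - 1) / (1 + r) ^ (1 + 2 * l) * u (r • ζ))
      (Set.Ico (0:ℝ) 1) := by
  have hp : 0 ≤ (n : ℝ) + 2 * l := by linarith
  have hξ (ξ : Metric.sphere (0 : EuclideanSpace ℝ (Fin n)) 1) :
      ‖(ξ : EuclideanSpace ℝ (Fin n))‖ = 1 := by
    simp
  have hweighted (r : ℝ) (hr : r ∈ Ico 0 1) :
      (1 - r) ^ ((n : ℝ) - 1) / (1 + r) ^ (1 + 2 * l) * u (r • ζ) =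
        ∫ ξ, ((1 - r) / ‖r • ζ - ξ‖) ^ ((n : ℝ) + 2 * l) ∂μ := by
    rw [hu _ (by rw [norm_smul_of_norm_eq_one hζ hr.1]; exact hr.2),
      norm_smul_of_norm_eq_one hζ hr.1, ← integral_const_mul]
    refine integral_congr_ae (.of_forall fun ξ => ?_)
    exact one_sub_rpow_div_one_add_rpow_mul ⟨by linarith [hr.1], hr.2⟩
      (norm_smul_sub_pos hζ (hξ ξ) hr) (by ring)
  intro r hr s hs hrs
  simp only [hweighted r hr, hweighted s hs]
  refine integral_mono (integrable_one_sub_div_norm_smul_sub_rpow μ hζ hs _)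
    (integrable_one_sub_div_norm_smul_sub_rpow μ hζ hr _) fun ξ => ?_
  exact rpow_le_rpow (div_pos (sub_pos.2 hs.2) (norm_smul_sub_pos hζ (hξ ξ) hs)).le
    (antitoneOn_one_sub_div_norm_smul_sub hζ (hξ ξ) hr hs hrs) hp

theorem stmt8 (n : ℕ) (hn : 2 ≤ n) (l : ℝ) (hl : -(n / 2 : ℝ) < l)
    (μ : MeasureTheory.Measure (Metric.sphere (0 : EuclideanSpace ℝ (Fin n)) 1))
    [MeasureTheory.IsFiniteMeasure μ]
    (u : EuclideanSpace ℝ (Fin n) → ℝ)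
    (hu : ∀ x, ‖x‖ < 1 →
      u x = ∫ ξ, (1 - ‖x‖ ^ 2) ^ (1 + 2 * l) / ‖x - (ξ : EuclideanSpace ℝ (Fin n))‖ ^ ((n : ℝ) + 2 * l) ∂μ)
    (ζ : EuclideanSpace ℝ (Fin n)) (hζ : ‖ζ‖ = 1) :
    AntitoneOn (fun r : ℝ => (1 - r) ^ ((n : ℝ) - 1) / (1 + r) ^ (1 + 2 * l) * u (r • ζ))
      (Set.Ico (0:ℝ) 1) :=
  stmt8_general n l hl μ u hu ζ hζ
end

section
/- Let n ≥ 1, α > -n, μ a finite positive Borel measure on the unit sphere S ⊂ ℂⁿ, and u(z) = ∫_S (1-|z|²)^(n+2α)/|1 - z·ζ̄|^(2n+2α) dμ(ζ) for z in the open unit ball of ℂⁿ. Then for every unit vector ζ, r ↦ ((1-r)^n/(1+r)^(n+2α)) · u(rζ) is decreasing and r ↦ ((1+r)^n/(1-r)^(n+2α)) · u(rζ) is increasing on [0,1). -/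
noncomputable instance (n : ℕ) : MeasurableSpace (EuclideanSpace ℂ (Fin n)) := borel _
instance (n : ℕ) : BorelSpace (EuclideanSpace ℂ (Fin n)) := ⟨rfl⟩

/-!
Writing `w = ⟪ξ, ζ⟫` (so `|w| ≤ 1`) and factoring `1 - r² = (1 - r)(1 + r)`, the two weighted
functions become `∫ ((1 ∓ r) / |1 - r w|) ^ (2n + 2α) dμ(ξ)`, and `2n + 2α > 0`. So it suffices that,
for each fixed `w` in the closed unit disc, `(1 - r) / |1 - r w|` decreases and `(1 + r) / |1 - r w|`
increases on `[0, 1)`; after squaring, both are polynomial inequalities in `r`, `Re w`, `Im w`.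
-/

open MeasureTheory Set

lemma norm_one_sub_ofReal_mul_sq (r : ℝ) (w : ℂ) :
    ‖1 - (r : ℂ) * w‖ ^ 2 = (1 - r * w.re) ^ 2 + (r * w.im) ^ 2 := by
  rw [Complex.sq_norm, Complex.normSq_apply]
  simp only [Complex.sub_re, Complex.sub_im, Complex.mul_re, Complex.mul_im, Complex.one_re,
    Complex.one_im, Complex.ofReal_re, Complex.ofReal_im]
  ring

lemma re_sq_add_im_sq_le_one {w : ℂ} (hw : ‖w‖ ≤ 1) : w.re ^ 2 + w.im ^ 2 ≤ 1 := by
  rw [sq, sq, ← Complex.normSq_apply, ← Complex.sq_norm]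
  nlinarith [norm_nonneg w]

lemma one_sub_le_norm_one_sub_ofReal_mul {r : ℝ} {w : ℂ} (hr : 0 ≤ r) (hw : ‖w‖ ≤ 1) :
    1 - r ≤ ‖1 - (r : ℂ) * w‖ :=
  calc 1 - r ≤ ‖(1 : ℂ)‖ - ‖(r : ℂ) * w‖ := by
        rw [norm_one, norm_mul, Complex.norm_of_nonneg hr]; nlinarith
    _ ≤ ‖1 - (r : ℂ) * w‖ := norm_sub_norm_le _ _

lemma norm_one_sub_ofReal_mul_pos {r : ℝ} {w : ℂ} (hr : r ∈ Ico (0 : ℝ) 1) (hw : ‖w‖ ≤ 1) :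
    0 < ‖1 - (r : ℂ) * w‖ :=
  (sub_pos.2 hr.2).trans_le (one_sub_le_norm_one_sub_ofReal_mul hr.1 hw)

lemma antitoneOn_one_sub_div_norm_one_sub_ofReal_mul {w : ℂ} (hw : ‖w‖ ≤ 1) :
    AntitoneOn (fun r : ℝ => (1 - r) / ‖1 - (r : ℂ) * w‖) (Ico 0 1) := by
  intro r hr s hs hrs
  rw [div_le_div_iff₀ (norm_one_sub_ofReal_mul_pos hs hw) (norm_one_sub_ofReal_mul_pos hr hw),
    ← pow_le_pow_iff_left₀ (mul_nonneg (by linarith [hs.2]) (norm_nonneg _))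
      (mul_nonneg (by linarith [hs.2]) (norm_nonneg _)) two_ne_zero,
    mul_pow, mul_pow, norm_one_sub_ofReal_mul_sq, norm_one_sub_ofReal_mul_sq]
  have hw' := re_sq_add_im_sq_le_one hw
  have hre : w.re ≤ 1 := by nlinarith [sq_nonneg w.im]
  -- The difference of the two sides is
  -- `(s - r) * (2 (1 - r) (1 - s) (1 - Re w) + (r (1 - s) + s (1 - r)) |1 - w|²)`.
  linarith [mul_nonneg (mul_nonneg (mul_nonneg (sub_nonneg.2 hrs)
      (sub_nonneg.2 (hrs.trans hs.2.le))) (sub_nonneg.2 hs.2.le)) (sub_nonneg.2 hre),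
    mul_nonneg (mul_nonneg (sub_nonneg.2 hrs)
      (by nlinarith [hr.1, hs.2] : (0:ℝ) ≤ r * (1 - s) + s * (1 - r)))
      (add_nonneg (sq_nonneg (1 - w.re)) (sq_nonneg w.im))]

lemma monotoneOn_one_add_div_norm_one_sub_ofReal_mul {w : ℂ} (hw : ‖w‖ ≤ 1) :
    MonotoneOn (fun r : ℝ => (1 + r) / ‖1 - (r : ℂ) * w‖) (Ico 0 1) := by
  intro r hr s hs hrs
  rw [div_le_div_iff₀ (norm_one_sub_ofReal_mul_pos hr hw) (norm_one_sub_ofReal_mul_pos hs hw),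
    ← pow_le_pow_iff_left₀ (mul_nonneg (by linarith [hr.1]) (norm_nonneg _))
      (mul_nonneg (by linarith [hs.1]) (norm_nonneg _)) two_ne_zero,
    mul_pow, mul_pow, norm_one_sub_ofReal_mul_sq, norm_one_sub_ofReal_mul_sq]
  have hw' := re_sq_add_im_sq_le_one hw
  have hre : -1 ≤ w.re := by nlinarith [sq_nonneg w.im]
  -- The difference of the two sides is
  -- `(s - r) * (2 (1 - r s) (1 + Re w) + (r + s + 2 r s) (1 - |w|²))`.
  linarith [mul_nonneg (mul_nonneg (sub_nonneg.2 hrs)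
      (by nlinarith [hr.1, hs.2] : (0:ℝ) ≤ 1 - r * s)) (neg_le_iff_add_nonneg'.1 hre),
    mul_nonneg (mul_nonneg (sub_nonneg.2 hrs)
      (by nlinarith [hr.1, hs.1] : (0:ℝ) ≤ r + s + 2 * (r * s)))
      (sub_nonneg.2 hw')]

lemma integrable_div_norm_one_sub_ofReal_mul_rpow {X : Type*} [MeasurableSpace X]
    {μ : Measure X} [IsFiniteMeasure μ] {w : X → ℂ} (hw_meas : Measurable w)
    (hw : ∀ x, ‖w x‖ ≤ 1) {t c r : ℝ} (ht : 0 ≤ t) (hc : 0 ≤ c) (hr : r ∈ Ico (0 : ℝ) 1) :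
    Integrable (fun x => (c / ‖1 - (r : ℂ) * w x‖) ^ t) μ := by
  refine .of_bound (by fun_prop : Measurable _).aestronglyMeasurable ((c / (1 - r)) ^ t)
    (ae_of_all _ fun x => ?_)
  have hnonneg : 0 ≤ c / ‖1 - (r : ℂ) * w x‖ := by positivity
  rw [Real.norm_of_nonneg (by positivity)]
  exact Real.rpow_le_rpow hnonneg (div_le_div_of_nonneg_left hc (sub_pos.2 hr.2)
    (one_sub_le_norm_one_sub_ofReal_mul hr.1 (hw x))) ht

theorem antitoneOn_integral_one_sub_div_norm_one_sub_ofReal_mul_rpow {X : Type*}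
    [MeasurableSpace X] (μ : Measure X) [IsFiniteMeasure μ] {w : X → ℂ} (hw_meas : Measurable w)
    (hw : ∀ x, ‖w x‖ ≤ 1) {t : ℝ} (ht : 0 ≤ t) :
    AntitoneOn (fun r : ℝ => ∫ x, ((1 - r) / ‖1 - (r : ℂ) * w x‖) ^ t ∂μ) (Ico 0 1) := by
  intro r hr s hs hrs
  have hs_nonneg : ∀ x, 0 ≤ (1 - s) / ‖1 - (s : ℂ) * w x‖ := fun x =>
    div_nonneg (sub_nonneg.2 hs.2.le) (norm_nonneg _)
  refine integral_mono_of_nonneg (ae_of_all _ fun x => Real.rpow_nonneg (hs_nonneg x) t)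
    (integrable_div_norm_one_sub_ofReal_mul_rpow hw_meas hw ht (sub_nonneg.2 hr.2.le) hr)
    (ae_of_all _ fun x => Real.rpow_le_rpow (hs_nonneg x)
      (antitoneOn_one_sub_div_norm_one_sub_ofReal_mul (hw x) hr hs hrs) ht)

theorem monotoneOn_integral_one_add_div_norm_one_sub_ofReal_mul_rpow {X : Type*}
    [MeasurableSpace X] (μ : Measure X) [IsFiniteMeasure μ] {w : X → ℂ} (hw_meas : Measurable w)
    (hw : ∀ x, ‖w x‖ ≤ 1) {t : ℝ} (ht : 0 ≤ t) :
    MonotoneOn (fun r : ℝ => ∫ x, ((1 + r) / ‖1 - (r : ℂ) * w x‖) ^ t ∂μ) (Ico 0 1) := by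
  intro r hr s hs hrs
  have hr_nonneg : ∀ x, 0 ≤ (1 + r) / ‖1 - (r : ℂ) * w x‖ := fun x =>
    div_nonneg (by linarith [hr.1]) (norm_nonneg _)
  refine integral_mono_of_nonneg (ae_of_all _ fun x => Real.rpow_nonneg (hr_nonneg x) t)
    (integrable_div_norm_one_sub_ofReal_mul_rpow hw_meas hw ht (by linarith [hs.1]) hs)
    (ae_of_all _ fun x => Real.rpow_le_rpow (hr_nonneg x)
      (monotoneOn_one_add_div_norm_one_sub_ofReal_mul (hw x) hr hs hrs) ht)

lemma rpow_div_rpow_mul_mul_rpow_div_rpow {p q A : ℝ} (hp : 0 < p) (hq : 0 < q) (hA : 0 < A)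
    (b c : ℝ) : p ^ b / q ^ c * ((p * q) ^ c / A ^ (b + c)) = (p / A) ^ (b + c) := by
  rw [Real.div_rpow hp.le hA.le, Real.rpow_add hp, Real.mul_rpow hp.le hq.le]
  have := Real.rpow_pos_of_pos hq c
  field_simp

theorem stmt18_general (n : ℕ) (a : ℝ) (ha : -(n : ℝ) < a)
    (μ : MeasureTheory.Measure (Metric.sphere (0 : EuclideanSpace ℂ (Fin n)) 1))
    [MeasureTheory.IsFiniteMeasure μ]
    (u : EuclideanSpace ℂ (Fin n) → ℝ)
    (hu : ∀ z, ‖z‖ < 1 →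
      u z = ∫ ξ, (1 - ‖z‖ ^ 2) ^ ((n : ℝ) + 2 * a) /
        ‖(1 - inner (𝕜 := ℂ) (ξ : EuclideanSpace ℂ (Fin n)) z)‖ ^ (2 * (n : ℝ) + 2 * a) ∂μ)
    (ζ : EuclideanSpace ℂ (Fin n)) (hζ : ‖ζ‖ = 1) :
    AntitoneOn (fun r : ℝ => (1 - r) ^ (n : ℝ) / (1 + r) ^ ((n : ℝ) + 2 * a) * u (r • ζ))
      (Set.Ico (0:ℝ) 1) ∧
    MonotoneOn (fun r : ℝ => (1 + r) ^ (n : ℝ) / (1 - r) ^ ((n : ℝ) + 2 * a) * u (r • ζ))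
      (Set.Ico (0:ℝ) 1) := by
  set w : Metric.sphere (0 : EuclideanSpace ℂ (Fin n)) 1 → ℂ :=
    fun ξ => inner ℂ (ξ : EuclideanSpace ℂ (Fin n)) ζ
  have hw : ∀ ξ, ‖w ξ‖ ≤ 1 := fun ξ => (norm_inner_le_norm _ _).trans (by simp [hζ])
  have hw_meas : Measurable w := (continuous_subtype_val.inner continuous_const).measurable
  have ht : 0 ≤ 2 * (n : ℝ) + 2 * a := by linarith
  have hweighted : ∀ r ∈ Ico (0 : ℝ) 1, ∀ {p q : ℝ}, 0 < p → 0 < q → p * q = 1 - r ^ 2 →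
      p ^ (n : ℝ) / q ^ ((n : ℝ) + 2 * a) * u (r • ζ) =
        ∫ ξ, (p / ‖1 - (r : ℂ) * w ξ‖) ^ (2 * (n : ℝ) + 2 * a) ∂μ := by
    intro r hr p q hp hq hpq
    have hrζ : ‖r • ζ‖ = r := by rw [norm_smul, hζ, mul_one, Real.norm_of_nonneg hr.1]
    rw [hu _ (by rw [hrζ]; exact hr.2), hrζ, ← hpq, ← integral_const_mul]
    refine integral_congr_ae (ae_of_all _ fun ξ => ?_)
    dsimp only
    rw [← Complex.coe_smul, inner_smul_right, show 2 * (n : ℝ) + 2 * a = n + (n + 2 * a) by ring]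
    exact rpow_div_rpow_mul_mul_rpow_div_rpow hp hq (norm_one_sub_ofReal_mul_pos hr (hw ξ)) _ _
  exact ⟨(antitoneOn_integral_one_sub_div_norm_one_sub_ofReal_mul_rpow μ hw_meas hw ht).congr
      fun r hr => (hweighted r hr (by linarith [hr.2]) (by linarith [hr.1]) (by ring)).symm,
    (monotoneOn_integral_one_add_div_norm_one_sub_ofReal_mul_rpow μ hw_meas hw ht).congr
      fun r hr => (hweighted r hr (by linarith [hr.1]) (by linarith [hr.2]) (by ring)).symm⟩

theorem stmt18 (n : ℕ) (hn : 1 ≤ n) (a : ℝ) (ha : -(n : ℝ) < a)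
    (μ : MeasureTheory.Measure (Metric.sphere (0 : EuclideanSpace ℂ (Fin n)) 1))
    [MeasureTheory.IsFiniteMeasure μ]
    (u : EuclideanSpace ℂ (Fin n) → ℝ)
    (hu : ∀ z, ‖z‖ < 1 →
      u z = ∫ ξ, (1 - ‖z‖ ^ 2) ^ ((n : ℝ) + 2 * a) /
        ‖(1 - inner (𝕜 := ℂ) (ξ : EuclideanSpace ℂ (Fin n)) z)‖ ^ (2 * (n : ℝ) + 2 * a) ∂μ)
    (ζ : EuclideanSpace ℂ (Fin n)) (hζ : ‖ζ‖ = 1) :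
    AntitoneOn (fun r : ℝ => (1 - r) ^ (n : ℝ) / (1 + r) ^ ((n : ℝ) + 2 * a) * u (r • ζ))
      (Set.Ico (0:ℝ) 1) ∧
    MonotoneOn (fun r : ℝ => (1 + r) ^ (n : ℝ) / (1 - r) ^ ((n : ℝ) + 2 * a) * u (r • ζ))
      (Set.Ico (0:ℝ) 1) :=
  stmt18_general n a ha μ u hu ζ hζ
end

section
/- Let n ≥ 1, α > -n, μ a finite positive Borel measure on the unit sphere S ⊂ ℂⁿ, and u the Poisson–Szegő integral u(z) = ∫_S (1-|z|²)^(n+2α)/|1-z·ζ̄|^(2n+2α) dμ(ζ). Then for every unit vector ζ, lim_{r→1⁻} (1-r)^n u(rζ) = 2^(n+2α) μ({ζ}). -/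
/-!
Along the radius `z = r ζ`, `(1 - r) ^ n u(r ζ) = ∫ K_r(⟪ξ, ζ⟫) dμ(ξ)` with
`K_r(w) = (1 - r) ^ q (1 + r) ^ p / |1 - r w| ^ q`, `p = n + 2α`, `q = 2n + 2α > 0`.
Since `|1 - r w| ≥ 1 - r` on the closed disc, `K_r ≤ (1 + r) ^ p` is uniformly bounded, and
`K_r(w) → 2 ^ p` if `w = 1` while `K_r(w) → 0` otherwise. On the sphere `⟪ξ, ζ⟫ = 1` only for
`ξ = ζ`, so dominated convergence gives the limit `2 ^ p μ({ζ})`.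
-/

open MeasureTheory Filter Topology Set

lemma one_sub_le_norm_one_sub_mul {r : ℝ} (hr : 0 ≤ r) {w : ℂ} (hw : ‖w‖ ≤ 1) :
    1 - r ≤ ‖1 - r * w‖ :=
  calc 1 - r ≤ 1 - ‖(r : ℂ) * w‖ := by
        rw [norm_mul, Complex.norm_real, Real.norm_of_nonneg hr]; nlinarith
    _ ≤ ‖1 - r * w‖ := by simpa using norm_sub_norm_le (1 : ℂ) (r * w)

/-- `(1 - r) ^ n * P_α(r ζ, ξ)` as a function of `w = ⟪ξ, ζ⟫`, with `p = n + 2α`, `q = 2n + 2α`. -/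
noncomputable def scaledPoissonKernel (p q r : ℝ) (w : ℂ) : ℝ :=
  (1 - r) ^ q * (1 + r) ^ p / ‖1 - r * w‖ ^ q

section scaledPoissonKernel

variable {p q r : ℝ} {w : ℂ}

lemma rpow_mul_div_eq_scaledPoissonKernel {s : ℝ} (hq : q = s + p) (hr : r ∈ Ico 0 1) :
    (1 - r) ^ s * ((1 - r ^ 2) ^ p / ‖1 - r * w‖ ^ q) = scaledPoissonKernel p q r w := by
  have h₁ : 0 < 1 - r := by linarith [hr.2]
  rw [scaledPoissonKernel, hq, Real.rpow_add h₁, show 1 - r ^ 2 = (1 - r) * (1 + r) by ring,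
    Real.mul_rpow h₁.le (by linarith [hr.1])]
  ring

lemma measurable_scaledPoissonKernel (p q r : ℝ) : Measurable (scaledPoissonKernel p q r) := by
  unfold scaledPoissonKernel; fun_prop

lemma scaledPoissonKernel_nonneg (hr : r ∈ Ico 0 1) : 0 ≤ scaledPoissonKernel p q r w := by
  obtain ⟨h₀, h₁⟩ := hr
  unfold scaledPoissonKernel
  positivity

lemma scaledPoissonKernel_le_max (hr : r ∈ Ico 0 1) (hw : ‖w‖ ≤ 1) (hq : 0 ≤ q) :
    scaledPoissonKernel p q r w ≤ max (2 ^ p) 1 := by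
  have hden : 1 - r ≤ ‖1 - r * w‖ := one_sub_le_norm_one_sub_mul hr.1 hw
  have hden_pos : 0 < ‖1 - r * w‖ ^ q := Real.rpow_pos_of_pos (by linarith [hr.2]) q
  calc scaledPoissonKernel p q r w ≤ (1 + r) ^ p := by
        rw [scaledPoissonKernel, div_le_iff₀ hden_pos, mul_comm]
        exact mul_le_mul_of_nonneg_left (Real.rpow_le_rpow (by linarith [hr.2]) hden hq)
          (Real.rpow_nonneg (by linarith [hr.1]) p)
    _ ≤ max (2 ^ p) 1 := by
        rcases le_or_gt 0 p with hp | hp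
        · exact le_max_of_le_left (Real.rpow_le_rpow (by linarith [hr.1]) (by linarith [hr.2]) hp)
        · exact le_max_of_le_right
            (Real.rpow_le_one_of_one_le_of_nonpos (by linarith [hr.1]) hp.le)

lemma scaledPoissonKernel_one (hr : r < 1) : scaledPoissonKernel p q r 1 = (1 + r) ^ p := by
  have h₁ : 0 < (1 - r) ^ q := Real.rpow_pos_of_pos (by linarith) q
  rw [scaledPoissonKernel, mul_one, show (1 : ℂ) - r = ((1 - r : ℝ) : ℂ) by push_cast; ring,
    Complex.norm_real, Real.norm_of_nonneg (by linarith), mul_div_cancel_left₀ _ h₁.ne']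

lemma tendsto_scaledPoissonKernel_one :
    Tendsto (fun r => scaledPoissonKernel p q r 1) (𝓝[<] 1) (𝓝 (2 ^ p)) := by
  have h : Tendsto (fun r : ℝ => (1 + r) ^ p) (𝓝 1) (𝓝 (2 ^ p)) := by
    simpa [one_add_one_eq_two] using
      ((continuous_const.add continuous_id : Continuous fun r : ℝ => 1 + r).tendsto 1).rpow_const
        (p := p) (Or.inl (by norm_num))
  exact (h.mono_left nhdsWithin_le_nhds).congr'
    (eventually_nhdsWithin_of_forall fun r hr => (scaledPoissonKernel_one hr).symm)

lemma tendsto_scaledPoissonKernel_of_ne_one (hw : w ≠ 1) (hq : 0 < q) :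
    Tendsto (fun r => scaledPoissonKernel p q r w) (𝓝[<] 1) (𝓝 0) := by
  have hw' : ‖1 - ((1 : ℝ) : ℂ) * w‖ ≠ 0 := by simpa [sub_eq_zero] using hw.symm
  have hcont : ContinuousAt (fun r => scaledPoissonKernel p q r w) 1 := by
    refine ContinuousAt.div ?_ ?_ (Real.rpow_pos_of_pos ((norm_nonneg _).lt_of_ne' hw') q).ne'
    · exact ((continuousAt_const.sub continuousAt_id).rpow_const (Or.inr hq.le)).mul
        ((continuousAt_const.add continuousAt_id).rpow_const (Or.inl (by norm_num)))
    · exact (by fun_prop : ContinuousAt (fun r : ℝ => ‖1 - r * w‖) 1).rpow_const (Or.inl hw')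
  simpa [scaledPoissonKernel, Real.zero_rpow hq.ne'] using
    hcont.tendsto.mono_left nhdsWithin_le_nhds

end scaledPoissonKernel

theorem tendsto_integral_scaledPoissonKernel {X : Type*} [MeasurableSpace X] (ν : Measure X)
    [IsFiniteMeasure ν] {p q : ℝ} (hq : 0 < q) {w : X → ℂ} (hw_meas : Measurable w)
    (hw : ∀ x, ‖w x‖ ≤ 1) :
    Tendsto (fun r => ∫ x, scaledPoissonKernel p q r (w x) ∂ν) (𝓝[<] 1)
      (𝓝 (2 ^ p * ν.real {x | w x = 1})) := by
  have hS : MeasurableSet {x | w x = 1} := hw_meas (measurableSet_singleton 1)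
  have hlim : ∀ x, Tendsto (fun r => scaledPoissonKernel p q r (w x)) (𝓝[<] 1)
      (𝓝 ({x | w x = 1}.indicator (fun _ => (2 : ℝ) ^ p) x)) := by
    intro x
    by_cases hx : w x = 1
    · simpa [hx] using tendsto_scaledPoissonKernel_one
    · simpa [hx] using tendsto_scaledPoissonKernel_of_ne_one hx hq
  rw [mul_comm, ← smul_eq_mul, ← integral_indicator_const _ hS]
  refine tendsto_integral_filter_of_dominated_convergence (fun _ => max (2 ^ p) 1) ?_ ?_
    (integrable_const _) (Eventually.of_forall hlim)
  · exact Eventually.of_forall fun r =>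
      ((measurable_scaledPoissonKernel p q r).comp hw_meas).aestronglyMeasurable
  · filter_upwards [Ico_mem_nhdsLT zero_lt_one] with r hr
    refine Eventually.of_forall fun x => ?_
    rw [Real.norm_of_nonneg (scaledPoissonKernel_nonneg hr)]
    exact scaledPoissonKernel_le_max hr (hw x) hq.le

theorem stmt19_general (n : ℕ) (a : ℝ) (ha : -(n : ℝ) < a)
    (μ : MeasureTheory.Measure (Metric.sphere (0 : EuclideanSpace ℂ (Fin n)) 1))
    [MeasureTheory.IsFiniteMeasure μ]
    (u : EuclideanSpace ℂ (Fin n) → ℝ)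
    (hu : ∀ z, ‖z‖ < 1 →
      u z = ∫ ξ, (1 - ‖z‖ ^ 2) ^ ((n : ℝ) + 2 * a) /
        (‖1 - inner (𝕜 := ℂ) (ξ : EuclideanSpace ℂ (Fin n)) z‖) ^ (2 * (n : ℝ) + 2 * a) ∂μ)
    (ζ : Metric.sphere (0 : EuclideanSpace ℂ (Fin n)) 1) :
    Filter.Tendsto (fun r : ℝ => (1 - r) ^ (n : ℝ) * u (r • (ζ : EuclideanSpace ℂ (Fin n))))
      (nhdsWithin 1 (Set.Iio 1))
      (nhds ((2 : ℝ) ^ ((n : ℝ) + 2 * a) * (μ {ζ}).toReal)) := by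
  have hζ : ‖(ζ : EuclideanSpace ℂ (Fin n))‖ = 1 := norm_eq_of_mem_sphere ζ
  have hw : ∀ ξ : Metric.sphere (0 : EuclideanSpace ℂ (Fin n)) 1,
      ‖inner ℂ (ξ : EuclideanSpace ℂ (Fin n)) ζ‖ ≤ 1 := fun ξ => by
    simpa [hζ, norm_eq_of_mem_sphere ξ] using
      norm_inner_le_norm (𝕜 := ℂ) (ξ : EuclideanSpace ℂ (Fin n)) ζ
  have hpeak : {ξ : Metric.sphere (0 : EuclideanSpace ℂ (Fin n)) 1 |
      inner ℂ (ξ : EuclideanSpace ℂ (Fin n)) ζ = 1} = {ζ} := by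
    ext ξ
    simp [inner_eq_one_iff_of_norm_eq_one (norm_eq_of_mem_sphere ξ) hζ, Subtype.ext_iff]
  have hlim := tendsto_integral_scaledPoissonKernel μ (p := n + 2 * a) (q := 2 * n + 2 * a)
    (by linarith)
    (by fun_prop : Measurable fun ξ : Metric.sphere (0 : EuclideanSpace ℂ (Fin n)) 1 =>
      inner ℂ (ξ : EuclideanSpace ℂ (Fin n)) ζ) hw
  rw [hpeak, measureReal_def] at hlim
  refine hlim.congr' ?_
  filter_upwards [Ico_mem_nhdsLT zero_lt_one] with r hr
  have hnorm : ‖r • (ζ : EuclideanSpace ℂ (Fin n))‖ = r := by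
    rw [norm_smul, hζ, mul_one, Real.norm_of_nonneg hr.1]
  rw [hu _ (hnorm.trans_lt hr.2), ← integral_const_mul]
  refine integral_congr_ae (.of_forall fun ξ => ?_)
  have hinner : inner ℂ (ξ : EuclideanSpace ℂ (Fin n)) (r • (ζ : EuclideanSpace ℂ (Fin n))) =
      r * inner ℂ (ξ : EuclideanSpace ℂ (Fin n)) ζ := by
    simp only [CStarModule.inner_smul_right_real, Complex.real_smul]
  dsimp only
  rw [hnorm, hinner]
  exact (rpow_mul_div_eq_scaledPoissonKernel (by ring) hr).symm

theorem stmt19 (n : ℕ) (hn : 1 ≤ n) (a : ℝ) (ha : -(n : ℝ) < a)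
    (μ : MeasureTheory.Measure (Metric.sphere (0 : EuclideanSpace ℂ (Fin n)) 1))
    [MeasureTheory.IsFiniteMeasure μ]
    (u : EuclideanSpace ℂ (Fin n) → ℝ)
    (hu : ∀ z, ‖z‖ < 1 →
      u z = ∫ ξ, (1 - ‖z‖ ^ 2) ^ ((n : ℝ) + 2 * a) /
        (‖1 - inner (𝕜 := ℂ) (ξ : EuclideanSpace ℂ (Fin n)) z‖) ^ (2 * (n : ℝ) + 2 * a) ∂μ)
    (ζ : Metric.sphere (0 : EuclideanSpace ℂ (Fin n)) 1) :
    Filter.Tendsto (fun r : ℝ => (1 - r) ^ (n : ℝ) * u (r • (ζ : EuclideanSpace ℂ (Fin n))))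
      (nhdsWithin 1 (Set.Iio 1))
      (nhds ((2 : ℝ) ^ ((n : ℝ) + 2 * a) * (μ {ζ}).toReal)) :=
  stmt19_general n a ha μ u hu ζ
end
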